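/- arXiv:1904.00219 — 5 statements merged into one kernel-verified Lean document; each statement's English description precedes it below -/
import Mathlib

section
/- Let r ∈ ℚ with 0 < r < 1 and n(r) > 1 (so also d(r) > 1 and S_r is atomic). For every nonzero x ∈ S_r that admits more than one factorization, the set of lengths of x is the infinite arithmetic progression L(x) = { min L(x) + k·(d(r) − n(r)) : k ∈ ℕ₀ }. -/
/-!
Write `r = n / d`. Trading `n` copies of `r ^ i` for `d` copies of `r ^ (i + 1)`, or back, keeps
the value and changes the length by `d - n`. Trading down as long as possible ends in a
factorization `ρ` with fewer than `d` copies of each `r ^ (i + 1)`, and `ρ` is unique: the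
difference of two such factorizations is an integer polynomial vanishing at `r`, so by the rational
root theorem `d` divides its leading coefficient, which is impossible for a coefficient of absolute
value below `d` (and a nonzero constant does not vanish). Hence every length is
`flen ρ + k * (d - n)`. A second factorization of `x` differs from `ρ`, so trading it down ends with
a trade into `ρ`, which leaves at least `n` copies of some `r ^ i` in `ρ`; trading up from there
forever realizes every such length.
-/

open Finsupp
open scoped ENNReal

/-- The Puiseux monoid (rational cyclic semiring) `S_r`, the additive submonoid of `ℚ`
generated by the nonnegative powers of `r`. -/
def S (r : ℚ) : AddSubmonoid ℚ := AddSubmonoid.closure {x : ℚ | ∃ n : ℕ, x = r ^ n}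

/-- A factorization of `x` over the powers of `r`: a finitely supported choice of
coefficients `α i` with `∑ α i * r ^ i = x`. -/
def IsFactorization (r x : ℚ) (α : ℕ →₀ ℕ) : Prop :=
  (α.sum fun i c => (c : ℚ) * r ^ i) = x

/-- The length of a factorization. -/
def flen (α : ℕ →₀ ℕ) : ℕ := α.sum fun _ c => c

/-- The set of lengths of factorizations of `x` over the powers of `r`. -/
def lengthSet (r x : ℚ) : Set ℕ :=
  {t | ∃ α : ℕ →₀ ℕ, IsFactorization r x α ∧ flen α = t}

/-- An atom of `S_r`: a nonzero element that is not the sum of two nonzero elements. -/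
def IsAtomS (r a : ℚ) : Prop :=
  a ∈ S r ∧ a ≠ 0 ∧ ¬ ∃ y z : ℚ, y ∈ S r ∧ z ∈ S r ∧ y ≠ 0 ∧ z ≠ 0 ∧ a = y + z

/-- The set of lengths of `x` as sums of atoms of `S_r`. -/
def atomLengthSet (r x : ℚ) : Set ℕ :=
  {t | ∃ f : Fin t → ℚ, (∀ i, IsAtomS r (f i)) ∧ ∑ i, f i = x}

open Polynomial

noncomputable def toPoly : (ℕ →₀ ℕ) →ₗ[ℕ] ℤ[X] := linearCombination ℕ (X ^ ·)

lemma coeff_toPoly (α : ℕ →₀ ℕ) (j : ℕ) : (toPoly α).coeff j = α j := by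
  simp only [toPoly, linearCombination_apply, Finsupp.sum, finsetSum_coeff, coeff_smul, coeff_X_pow]
  simp +contextual

lemma isFactorization_iff_aeval {r x : ℚ} {α : ℕ →₀ ℕ} :
    IsFactorization r x α ↔ aeval r (toPoly α) = x := by
  simp [IsFactorization, toPoly, linearCombination_apply, map_finsuppSum, nsmul_eq_mul]

lemma flen_add_single (γ : ℕ →₀ ℕ) (i c : ℕ) : flen (γ + single i c) = flen γ + c := by
  change (γ + single i c).degree = γ.degree + c
  simp

lemma Rat.den_dvd_leadingCoeff_of_aeval_eq_zero {p : ℤ[X]} {q : ℚ} (h : aeval q p = 0) :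
    (q.den : ℤ) ∣ p.leadingCoeff :=
  (Rat.associated_num_den q).2.dvd_iff_dvd_left.mp (den_dvd_of_is_root h)

def IsReducedFactorization (d : ℕ) (α : ℕ →₀ ℕ) : Prop := ∀ i, α (i + 1) < d

theorem IsReducedFactorization.eq_of_aeval_eq {r : ℚ} {α β : ℕ →₀ ℕ}
    (hα : IsReducedFactorization r.den α) (hβ : IsReducedFactorization r.den β)
    (h : aeval r (toPoly α) = aeval r (toPoly β)) : α = β := by
  by_contra hne
  set p := toPoly α - toPoly β
  have hcoeff (j : ℕ) : p.coeff j = α j - β j := by simp [p, coeff_toPoly]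
  have hp : p ≠ 0 := fun hp => hne <| Finsupp.ext fun j => by
    have := hcoeff j; rw [hp, coeff_zero] at this; omega
  have hroot : aeval r p = 0 := by simp [p, h]
  have hlc : p.leadingCoeff ≠ 0 := leadingCoeff_ne_zero.mpr hp
  cases hdeg : p.natDegree with
  | zero =>
    rw [eq_C_of_natDegree_eq_zero hdeg, aeval_C] at hroot
    exact hlc (by simpa [leadingCoeff, hdeg] using hroot)
  | succ i =>
    have hdvd := Rat.den_dvd_leadingCoeff_of_aeval_eq_zero hroot
    rw [leadingCoeff, hdeg, hcoeff] at hdvd hlc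
    have hsmall : |(α (i + 1) : ℤ) - β (i + 1)| < r.den := by
      have := hα i; have := hβ i; rw [abs_lt]; omega
    exact hlc (Int.eq_zero_of_abs_lt_dvd hdvd hsmall)

section Moves

variable {r : ℚ} {n d : ℕ}

lemma aeval_toPoly_add_single_succ (hdr : (d : ℚ) * r = n) (γ : ℕ →₀ ℕ) (i : ℕ) :
    aeval r (toPoly (γ + single (i + 1) d)) = aeval r (toPoly (γ + single i n)) := by
  simp only [map_add, toPoly, linearCombination_single, map_nsmul, map_pow, aeval_X, add_right_inj]
  rw [nsmul_eq_mul, nsmul_eq_mul, pow_succ, ← hdr]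
  ring

theorem exists_isReducedFactorization (hdr : (d : ℚ) * r = n) (hnd : n < d) (α : ℕ →₀ ℕ) :
    ∃ ρ k, IsReducedFactorization d ρ ∧ aeval r (toPoly ρ) = aeval r (toPoly α) ∧
      flen α = flen ρ + k * (d - n) ∧ (ρ = α ∨ ∃ i, n ≤ ρ i) := by
  induction hm : flen α using Nat.strong_induction_on generalizing α with
  | _ m ih =>
    by_cases hred : IsReducedFactorization d α
    · exact ⟨α, 0, hred, rfl, by simp [hm], .inl rfl⟩
    obtain ⟨i, hi⟩ : ∃ i, d ≤ α (i + 1) := by simpa [IsReducedFactorization] using hred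
    obtain ⟨γ, rfl⟩ : ∃ γ, α = γ + single (i + 1) d :=
      ⟨α - single (i + 1) d, (tsub_add_cancel_of_le (single_le_iff.mpr hi)).symm⟩
    have hlt : flen (γ + single i n) < m := by rw [← hm, flen_add_single, flen_add_single]; omega
    obtain ⟨ρ, k, hρ, hval, hlen, hbig⟩ := ih _ hlt (γ + single i n) rfl
    refine ⟨ρ, k + 1, hρ, hval.trans (aeval_toPoly_add_single_succ hdr γ i).symm, ?_, ?_⟩
    · rw [flen_add_single] at hlen
      rw [← hm, flen_add_single, add_one_mul]
      omega
    · rcases hbig with rfl | hbig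
      · exact .inr ⟨i, by simp⟩
      · exact .inr hbig

theorem exists_flen_eq_add_mul (hdr : (d : ℚ) * r = n) (hnd : n ≤ d) {α : ℕ →₀ ℕ} {i : ℕ}
    (hi : n ≤ α i) (k : ℕ) :
    ∃ β, aeval r (toPoly β) = aeval r (toPoly α) ∧ flen β = flen α + k * (d - n) := by
  induction k generalizing α i with
  | zero => exact ⟨α, rfl, by simp⟩
  | succ k ih =>
    obtain ⟨γ, rfl⟩ : ∃ γ, α = γ + single i n :=
      ⟨α - single i n, (tsub_add_cancel_of_le (single_le_iff.mpr hi)).symm⟩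
    obtain ⟨β, hval, hlen⟩ :=
      ih (α := γ + single (i + 1) d) (i := i + 1) (by simpa using le_add_left hnd)
    refine ⟨β, hval.trans (aeval_toPoly_add_single_succ hdr γ i), ?_⟩
    rw [hlen, flen_add_single, flen_add_single, add_one_mul]
    omega

end Moves

lemma Nat.sInf_setOf_exists_eq_add_mul (a m : ℕ) : sInf {t | ∃ k, t = a + k * m} = a :=
  le_antisymm (Nat.sInf_le ⟨0, by simp⟩) (le_csInf ⟨a, 0, by simp⟩ (by rintro _ ⟨k, rfl⟩; omega))

theorem lengthSet_eq_of_ne {r x : ℚ} {n : ℕ} (hdr : (r.den : ℚ) * r = n) (hnd : n < r.den)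
    {α β : ℕ →₀ ℕ} (hα : IsFactorization r x α) (hβ : IsFactorization r x β) (hne : α ≠ β) :
    ∃ ρ, lengthSet r x = {t | ∃ k, t = flen ρ + k * (r.den - n)} := by
  rw [isFactorization_iff_aeval] at hα hβ
  obtain ⟨ρ, -, hρ, hρα, -, -⟩ := exists_isReducedFactorization hdr hnd α
  have reduce (γ : ℕ →₀ ℕ) (hγ : aeval r (toPoly γ) = x) :
      (∃ k, flen γ = flen ρ + k * (r.den - n)) ∧ (ρ = γ ∨ ∃ i, n ≤ ρ i) := by
    obtain ⟨ρ', k, hρ', hval, hlen, hbig⟩ := exists_isReducedFactorization hdr hnd γ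
    obtain rfl := hρ'.eq_of_aeval_eq hρ (by rw [hval, hγ, hρα, hα])
    exact ⟨⟨k, hlen⟩, hbig⟩
  obtain ⟨i, hi⟩ : ∃ i, n ≤ ρ i := by
    by_contra hsmall
    exact hne (((reduce α hα).2.resolve_right hsmall).symm.trans
      ((reduce β hβ).2.resolve_right hsmall))
  refine ⟨ρ, Set.ext fun t => ⟨?_, ?_⟩⟩
  · rintro ⟨γ, hγ, rfl⟩
    exact (reduce γ (isFactorization_iff_aeval.mp hγ)).1
  · rintro ⟨k, rfl⟩
    obtain ⟨γ, hγ, hlen⟩ := exists_flen_eq_add_mul hdr hnd.le hi k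
    exact ⟨γ, isFactorization_iff_aeval.mpr (hγ.trans (hρα.trans hα)), hlen⟩

theorem stmt0_general (r : ℚ) (h0 : 0 < r) (h1 : r < 1)
    (x : ℚ)
    (hm : ∃ α β : ℕ →₀ ℕ, IsFactorization r x α ∧ IsFactorization r x β ∧ α ≠ β) :
    lengthSet r x =
      {t : ℕ | ∃ k : ℕ, t = sInf (lengthSet r x) + k * (r.den - r.num.toNat)} := by
  have hnum := Rat.num_pos.mpr h0
  have hdr : (r.den : ℚ) * r = r.num.toNat := by
    rw [mul_comm, Rat.mul_den_eq_num]
    exact_mod_cast (Int.toNat_of_nonneg hnum.le).symm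
  have hnd : r.num.toNat < r.den := by
    have := Rat.num_lt_denom_iff.mpr h1
    omega
  obtain ⟨α, β, hα, hβ, hne⟩ := hm
  obtain ⟨ρ, hρ⟩ := lengthSet_eq_of_ne hdr hnd hα hβ hne
  rw [hρ, Nat.sInf_setOf_exists_eq_add_mul]

theorem stmt0 (r : ℚ) (h0 : 0 < r) (h1 : r < 1) (hn : 1 < r.num)
    (x : ℚ) (hx : x ∈ S r) (hx0 : x ≠ 0)
    (hm : ∃ α β : ℕ →₀ ℕ, IsFactorization r x α ∧ IsFactorization r x β ∧ α ≠ β) :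
    lengthSet r x =
      {t : ℕ | ∃ k : ℕ, t = sInf (lengthSet r x) + k * (r.den - r.num.toNat)} :=
  stmt0_general r h0 h1 x hm
end

section
/- Let r ∈ ℚ_{>1} \ ℕ with n(r) > 1 and d(r) > 1 (so S_r is atomic). For every nonzero x ∈ S_r that admits more than one factorization, L(x) has a minimum and a maximum, (n(r) − d(r)) divides max L(x) − min L(x), and L(x) = { min L(x) + k·(n(r) − d(r)) : k ∈ ℤ, 0 ≤ k ≤ (max L(x) − min L(x))/(n(r) − d(r)) }; in particular L(x) is an arithmetic progression with difference n(r) − d(r). -/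
open Finsupp
open scoped ENNReal

/-!
Trading `n(r)` copies of the atom `r^i` for `d(r)` copies of `r^(i+1)` preserves the value of a
factorization and lowers its length by exactly `n(r) - d(r)`. Trades can be performed as long as
some coefficient is at least `n(r)`, so every factorization of `x` trades down to one whose
coefficients are all below `n(r)`. That one is unique: two of them give an integer polynomial
vanishing at `r` with coefficients of absolute value below `n(r)`, and the rational root theorem
(the numerator of a root divides the constant coefficient, then divide by `X` and repeat) forces
it to be zero. Hence all factorizations of `x` trade down to the same `ρ`, which has the least
length, every length is `|ρ| + k (n(r) - d(r))`, and the trading chain from a factorization of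
maximal length passes through every intermediate length.
-/

open Polynomial Relation

theorem Relation.ReflTransGen.exists_levels_of_apply_eq_add {α : Type*} {R : α → α → Prop}
    {f : α → ℕ} {c : ℕ} (hf : ∀ a b, R a b → f a = f b + c) {a b : α}
    (h : ReflTransGen R a b) :
    ∃ K, f a = f b + K * c ∧ ∀ k ≤ K, ∃ z, ReflTransGen R z b ∧ f z = f b + k * c := by
  induction h using ReflTransGen.head_induction_on with
  | refl => exact ⟨0, by simp, fun k hk => ⟨b, .refl, by simp [Nat.le_zero.mp hk]⟩⟩
  | @head a a' hstep hrest ih =>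
    obtain ⟨K, hK, hlev⟩ := ih
    refine ⟨K + 1, by rw [hf a a' hstep, hK]; ring, fun k hk => ?_⟩
    rcases Nat.lt_or_eq_of_le hk with hk | rfl
    · exact hlev k (Nat.lt_succ_iff.mp hk)
    · exact ⟨a, .head hstep hrest, by rw [hf a a' hstep, hK]; ring⟩

theorem Polynomial.eq_zero_of_aeval_eq_zero_of_natAbs_coeff_lt {r : ℚ} (hr : r ≠ 0)
    {p : ℤ[X]} (hp : aeval r p = 0) (hc : ∀ i, (p.coeff i).natAbs < r.num.natAbs) : p = 0 := by
  have hcoeff : p.coeff 0 = 0 := by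
    have hdvd : r.num ∣ p.coeff 0 :=
      (Rat.isFractionRingNum r).symm.dvd.trans (num_dvd_of_is_root hp)
    exact Int.eq_zero_of_dvd_of_natAbs_lt_natAbs hdvd (hc 0)
  have hp' : p = X * divX p := by simpa [hcoeff] using (X_mul_divX_add p).symm
  by_cases hdeg : p.natDegree = 0
  · rw [eq_C_of_natDegree_eq_zero hdeg, hcoeff, C_0]
  have hdiv : aeval r (divX p) = 0 := by
    rw [hp', map_mul, aeval_X] at hp
    exact (mul_eq_zero.mp hp).resolve_left hr
  have := Polynomial.eq_zero_of_aeval_eq_zero_of_natAbs_coeff_lt hr hdiv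
    fun i => by rw [coeff_divX]; exact hc _
  rw [hp', this, mul_zero]
termination_by p.natDegree
decreasing_by rw [natDegree_divX_eq_natDegree_tsub_one]; omega

theorem Rat.den_mul_eq_num_toNat {r : ℚ} (hr : 0 < r) : (r.den : ℚ) * r = r.num.toNat := by
  have h : ((r.num.toNat : ℕ) : ℚ) = r.num := by
    exact_mod_cast Int.toNat_of_nonneg (Rat.num_nonneg.mpr hr.le)
  rw [h, mul_comm]
  exact_mod_cast Rat.mul_den_eq_num r

theorem Rat.den_lt_num_toNat {r : ℚ} (h1 : 1 < r) : r.den < r.num.toNat := by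
  have h := mul_lt_mul_of_pos_left h1 (show (0 : ℚ) < r.den by positivity)
  rw [mul_one, Rat.den_mul_eq_num_toNat (one_pos.trans h1)] at h
  exact_mod_cast h

namespace CyclicSemiring

noncomputable def toPoly (α : ℕ →₀ ℕ) : ℤ[X] := α.sum fun i c => monomial i (c : ℤ)

@[simp]
theorem coeff_toPoly (α : ℕ →₀ ℕ) (i : ℕ) : (toPoly α).coeff i = α i := by
  simp only [toPoly, Finsupp.sum, finsetSum_coeff, coeff_monomial]
  simp +contextual [eq_comm]

theorem toPoly_add_single (α : ℕ →₀ ℕ) (i c : ℕ) :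
    toPoly (α + Finsupp.single i c) = toPoly α + monomial i (c : ℤ) := by
  ext j
  simp [coeff_monomial, Finsupp.single_apply]

theorem isFactorization_iff_aeval {r x : ℚ} {α : ℕ →₀ ℕ} :
    IsFactorization r x α ↔ aeval r (toPoly α) = x := by
  simp [IsFactorization, toPoly, map_finsuppSum, aeval_monomial]

theorem flen_add_single (α : ℕ →₀ ℕ) (i c : ℕ) : flen (α + Finsupp.single i c) = flen α + c :=
  (map_add Finsupp.degree α _).trans (by rw [Finsupp.degree_single]; rfl)

def Trade (r : ℚ) (α β : ℕ →₀ ℕ) : Prop :=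
  ∃ γ i, α = γ + Finsupp.single i r.num.toNat ∧ β = γ + Finsupp.single (i + 1) r.den

def IsReduced (r : ℚ) (α : ℕ →₀ ℕ) : Prop := ∀ i, α i < r.num.toNat

variable {r x : ℚ} {α β ρ : ℕ →₀ ℕ}

theorem aeval_toPoly_eq_of_trade (hr : 0 < r) (h : Trade r α β) :
    aeval r (toPoly α) = aeval r (toPoly β) := by
  obtain ⟨γ, i, rfl, rfl⟩ := h
  simp only [toPoly_add_single, map_add, aeval_monomial, pow_succ, eq_intCast, Int.cast_natCast]
  rw [← Rat.den_mul_eq_num_toNat hr]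
  ring

theorem aeval_toPoly_eq_of_reflTransGen (hr : 0 < r) (h : ReflTransGen (Trade r) α β) :
    aeval r (toPoly α) = aeval r (toPoly β) := by
  induction h with
  | refl => rfl
  | tail _ hstep ih => exact ih.trans (aeval_toPoly_eq_of_trade hr hstep)

theorem isFactorization_iff_of_reflTransGen (hr : 0 < r) (h : ReflTransGen (Trade r) α β) :
    IsFactorization r x α ↔ IsFactorization r x β := by
  rw [isFactorization_iff_aeval, isFactorization_iff_aeval, aeval_toPoly_eq_of_reflTransGen hr h]

theorem flen_eq_add_of_trade (h1 : 1 < r) (h : Trade r α β) :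
    flen α = flen β + (r.num.toNat - r.den) := by
  obtain ⟨γ, i, rfl, rfl⟩ := h
  have := Rat.den_lt_num_toNat h1
  rw [flen_add_single, flen_add_single]
  omega

theorem exists_trade {i : ℕ} (h : r.num.toNat ≤ α i) : ∃ β, Trade r α β :=
  ⟨_, _, _, (tsub_add_cancel_of_le (Finsupp.single_le_iff.mpr h)).symm, rfl⟩

theorem exists_isReduced (h1 : 1 < r) (α : ℕ →₀ ℕ) :
    ∃ ρ, ReflTransGen (Trade r) α ρ ∧ IsReduced r ρ := by
  obtain ⟨ρ, hαρ, hmin⟩ :=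
    (measure flen).wf.has_min {γ | ReflTransGen (Trade r) α γ} ⟨α, .refl⟩
  refine ⟨ρ, hαρ, fun i => not_le.mp fun hi => ?_⟩
  obtain ⟨β, hβ⟩ := exists_trade hi
  have := flen_eq_add_of_trade h1 hβ
  have := Rat.den_lt_num_toNat h1
  exact hmin β (hαρ.tail hβ) (show flen β < flen ρ by omega)

theorem eq_of_isReduced (hr : 0 < r) (hα : IsReduced r α) (hβ : IsReduced r β)
    (h : aeval r (toPoly α) = aeval r (toPoly β)) : α = β := by
  have hzero : toPoly α - toPoly β = 0 := by
    refine eq_zero_of_aeval_eq_zero_of_natAbs_coeff_lt hr.ne' (by rw [map_sub, h, sub_self]) ?_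
    intro i
    rw [coeff_sub, coeff_toPoly, coeff_toPoly]
    have := hα i
    have := hβ i
    have := Rat.num_pos.mpr hr
    omega
  ext i
  simpa using congrArg (coeff · i) (sub_eq_zero.mp hzero)

theorem reflTransGen_of_isReduced (h1 : 1 < r) (hρ : IsFactorization r x ρ)
    (hred : IsReduced r ρ) (hβ : IsFactorization r x β) : ReflTransGen (Trade r) β ρ := by
  have hr : 0 < r := one_pos.trans h1
  obtain ⟨ρ', hβρ', hred'⟩ := exists_isReduced h1 β
  rw [isFactorization_iff_aeval] at hρ hβ
  have : ρ' = ρ := eq_of_isReduced hr hred' hred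
    (by rw [← aeval_toPoly_eq_of_reflTransGen hr hβρ', hβ, hρ])
  exact this ▸ hβρ'

theorem exists_levels_of_isReduced (h1 : 1 < r) (hρ : IsFactorization r x ρ)
    (hred : IsReduced r ρ) (hβ : IsFactorization r x β) :
    ∃ K, flen β = flen ρ + K * (r.num.toNat - r.den) ∧
      ∀ k ≤ K, flen ρ + k * (r.num.toNat - r.den) ∈ lengthSet r x := by
  obtain ⟨K, hK, hlev⟩ := (reflTransGen_of_isReduced h1 hρ hred hβ).exists_levels_of_apply_eq_add
    fun _ _ h => flen_eq_add_of_trade h1 h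
  refine ⟨K, hK, fun k hk => ?_⟩
  obtain ⟨z, hzρ, hz⟩ := hlev k hk
  exact ⟨z, (isFactorization_iff_of_reflTransGen (one_pos.trans h1) hzρ).mpr hρ, hz⟩

theorem isLeast_lengthSet_of_isReduced (h1 : 1 < r) (hρ : IsFactorization r x ρ)
    (hred : IsReduced r ρ) : IsLeast (lengthSet r x) (flen ρ) := by
  refine ⟨⟨ρ, hρ, rfl⟩, ?_⟩
  rintro _ ⟨β, hβ, rfl⟩
  obtain ⟨K, hK, -⟩ := exists_levels_of_isReduced h1 hρ hred hβ
  omega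

theorem exists_lengthSet_eq_of_isReduced (h1 : 1 < r) (hρ : IsFactorization r x ρ)
    (hred : IsReduced r ρ) (hβ : IsFactorization r x β)
    (hmax : flen β ∈ upperBounds (lengthSet r x)) :
    ∃ K, flen β = flen ρ + K * (r.num.toNat - r.den) ∧
      lengthSet r x = {t | ∃ k, k ≤ K ∧ t = flen ρ + k * (r.num.toNat - r.den)} := by
  have hc : 0 < r.num.toNat - r.den := Nat.sub_pos_of_lt (Rat.den_lt_num_toNat h1)
  obtain ⟨K, hK, hlev⟩ := exists_levels_of_isReduced h1 hρ hred hβ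
  refine ⟨K, hK, Set.ext fun t => ⟨?_, ?_⟩⟩
  · rintro ⟨γ, hγ, rfl⟩
    obtain ⟨k, hk, -⟩ := exists_levels_of_isReduced h1 hρ hred hγ
    refine ⟨k, (Nat.mul_le_mul_right_iff hc).mp ?_, hk⟩
    have := hmax ⟨γ, hγ, rfl⟩
    omega
  · rintro ⟨k, hk, rfl⟩
    exact hlev k hk

theorem flen_le_of_isFactorization (h1 : 1 ≤ r) (hα : IsFactorization r x α) :
    (flen α : ℚ) ≤ x := by
  rw [← show (α.sum fun i c => (c : ℚ) * r ^ i) = x from hα, flen, Finsupp.sum, Finsupp.sum,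
    Nat.cast_sum]
  exact Finset.sum_le_sum fun i _ => le_mul_of_one_le_right (Nat.cast_nonneg _) (one_le_pow₀ h1)

theorem bddAbove_lengthSet (h1 : 1 ≤ r) : BddAbove (lengthSet r x) := by
  refine ⟨⌈x⌉₊, ?_⟩
  rintro _ ⟨α, hα, rfl⟩
  exact_mod_cast (flen_le_of_isFactorization h1 hα).trans (Nat.le_ceil x)

end CyclicSemiring

open CyclicSemiring in
theorem stmt1_general (r : ℚ) (h1 : 1 < r) (x : ℚ)
    (hm : ∃ α β : ℕ →₀ ℕ, IsFactorization r x α ∧ IsFactorization r x β ∧ α ≠ β) :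
    ∃ m M : ℕ, IsLeast (lengthSet r x) m ∧ IsGreatest (lengthSet r x) M ∧
      (r.num.toNat - r.den) ∣ (M - m) ∧
      lengthSet r x = {t : ℕ | ∃ k : ℕ,
        k ≤ (M - m) / (r.num.toNat - r.den) ∧ t = m + k * (r.num.toNat - r.den)} := by
  have hr : 0 < r := one_pos.trans h1
  obtain ⟨α, -, hα, -⟩ := hm
  obtain ⟨ρ, hαρ, hred⟩ := exists_isReduced h1 α
  have hρ : IsFactorization r x ρ := (isFactorization_iff_of_reflTransGen hr hαρ).mp hα
  obtain ⟨_, ⟨μ, hμ, rfl⟩, hmax⟩ :=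
    (bddAbove_lengthSet h1.le).exists_isGreatest_of_nonempty ⟨_, ρ, hρ, rfl⟩
  obtain ⟨K, hK, hset⟩ := exists_lengthSet_eq_of_isReduced h1 hρ hred hμ hmax
  have hc : 0 < r.num.toNat - r.den := Nat.sub_pos_of_lt (Rat.den_lt_num_toNat h1)
  refine ⟨flen ρ, flen μ, isLeast_lengthSet_of_isReduced h1 hρ hred, ⟨⟨μ, hμ, rfl⟩, hmax⟩,
    ⟨K, by rw [hK, Nat.add_sub_cancel_left, mul_comm]⟩, ?_⟩
  rwa [hK, Nat.add_sub_cancel_left, Nat.mul_div_cancel _ hc]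

theorem stmt1 (r : ℚ) (h1 : 1 < r) (hd : r.den ≠ 1)
    (x : ℚ) (hx : x ∈ S r) (hx0 : x ≠ 0)
    (hm : ∃ α β : ℕ →₀ ℕ, IsFactorization r x α ∧ IsFactorization r x β ∧ α ≠ β) :
    ∃ m M : ℕ, IsLeast (lengthSet r x) m ∧ IsGreatest (lengthSet r x) M ∧
      (r.num.toNat - r.den) ∣ (M - m) ∧
      lengthSet r x = {t : ℕ | ∃ k : ℕ,
        k ≤ (M - m) / (r.num.toNat - r.den) ∧ t = m + k * (r.num.toNat - r.den)} :=
  stmt1_general r h1 x hm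
end

section
/- Let r ∈ ℚ_{>0} be such that S_r is atomic (i.e., r = 1 or n(r) > 1). Then L(x) is a finite set for every nonzero x ∈ S_r if and only if r ≥ 1. (In other words, the atomic monoid S_r is a BF-monoid if and only if r ≥ 1.) -/
/-!
If `1 ≤ r`, every nonzero element of `S_r` is at least `1`, so a sum of `t` atoms equal to `x`
has `t ≤ x`. If `r < 1` and `n(r) > 1`, every power `r ^ k` is an atom: for a prime `p ∣ n(r)`,
a nonzero element of `S_r` below `r ^ k` is a sum of powers `r ^ e` with `e > k`, so its `p`-adic
valuation exceeds that of `r ^ k`. Iterating `n r ^ j = (d - n) r ^ (j + 1) + n r ^ (j + 1)`,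
where `n = n(r)` and `d = d(r)`, then writes `n` as a sum of `d + k (d - n)` atoms for every `k`.
-/

open Finsupp
open scoped ENNReal

lemma nonneg_of_mem_S {r : ℚ} (hr : 0 ≤ r) {x : ℚ} (hx : x ∈ S r) : 0 ≤ x := by
  induction hx using AddSubmonoid.closure_induction with
  | mem _ h => obtain ⟨n, rfl⟩ := h; positivity
  | zero => exact le_rfl
  | add _ _ _ _ hx hy => exact add_nonneg hx hy

lemma one_le_of_mem_S {r : ℚ} (hr : 1 ≤ r) {x : ℚ} (hx : x ∈ S r) (hx0 : x ≠ 0) : 1 ≤ x := by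
  suffices x = 0 ∨ 1 ≤ x from this.resolve_left hx0
  clear hx0
  induction hx using AddSubmonoid.closure_induction with
  | mem _ h => obtain ⟨n, rfl⟩ := h; exact .inr (one_le_pow₀ hr)
  | zero => exact .inl rfl
  | add x y _ _ hx hy =>
    rcases hx with rfl | hx
    · simpa using hy
    rcases hy with rfl | hy
    · simp [hx]
    exact .inr (by linarith)

lemma natCast_mem_S (r : ℚ) (n : ℕ) : (n : ℚ) ∈ S r := by
  have h1 : (1 : ℚ) ∈ S r := AddSubmonoid.subset_closure ⟨0, (pow_zero r).symm⟩
  simpa using nsmul_mem h1 n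

lemma natCast_le_of_mem_atomLengthSet {r x : ℚ} (hr : 1 ≤ r) {t : ℕ}
    (ht : t ∈ atomLengthSet r x) : (t : ℚ) ≤ x := by
  obtain ⟨f, hf, rfl⟩ := ht
  calc (t : ℚ) = ∑ _i : Fin t, (1 : ℚ) := by simp
    _ ≤ ∑ i, f i := Finset.sum_le_sum fun i _ => one_le_of_mem_S hr (hf i).1 (hf i).2.1

lemma atomLengthSet_finite {r : ℚ} (hr : 1 ≤ r) (x : ℚ) : (atomLengthSet r x).Finite :=
  (Set.finite_Iic ⌊x⌋₊).subset fun _ ht =>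
    Nat.le_floor (natCast_le_of_mem_atomLengthSet hr ht)

lemma padicValRat_pos_of_dvd_num {p : ℕ} [Fact p.Prime] {r : ℚ} (hr : r ≠ 0)
    (hp : (p : ℤ) ∣ r.num) : 0 < padicValRat p r := by
  have hden : ¬ p ∣ r.den := fun hd =>
    (Fact.out : p.Prime).one_lt.ne'
      (Nat.eq_one_of_dvd_coprimes r.reduced (Int.natCast_dvd.mp hp) hd)
  have hnum : 1 ≤ padicValInt p r.num :=
    ((padicValInt_dvd_iff 1 r.num).mp (by simpa using hp)).resolve_left (Rat.num_ne_zero.mpr hr)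
  rw [padicValRat_def, padicValNat.eq_zero_of_not_dvd hden]
  omega

lemma le_padicValRat_of_mem_S {r : ℚ} (h0 : 0 < r) (h1 : r < 1) {p : ℕ} [Fact p.Prime]
    (hp : 0 ≤ padicValRat p r) {k : ℕ} {x : ℚ} (hx : x ∈ S r) (hxk : x < r ^ k) (hx0 : x ≠ 0) :
    (k + 1) * padicValRat p r ≤ padicValRat p x := by
  induction hx using AddSubmonoid.closure_induction with
  | mem _ h =>
    obtain ⟨e, rfl⟩ := h
    have hke : k < e := (pow_lt_pow_iff_right_of_lt_one₀ h0 h1).mp hxk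
    rw [padicValRat.pow]
    exact mul_le_mul_of_nonneg_right (by exact_mod_cast hke) hp
  | zero => exact absurd rfl hx0
  | add x y hxS hyS hx hy =>
    have hx' := nonneg_of_mem_S h0.le hxS
    have hy' := nonneg_of_mem_S h0.le hyS
    rcases eq_or_ne x 0 with rfl | hx0'
    · simpa using hy (by simpa using hxk) (by simpa using hx0)
    rcases eq_or_ne y 0 with rfl | hy0'
    · simpa using hx (by simpa using hxk) (by simpa using hx0)
    exact (le_min (hx (by linarith) hx0') (hy (by linarith) hy0')).trans
      (padicValRat.min_le_padicValRat_add hx0)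

lemma isAtomS_pow {r : ℚ} (h0 : 0 < r) (h1 : r < 1) (hn : 1 < r.num) (k : ℕ) :
    IsAtomS r (r ^ k) := by
  refine ⟨AddSubmonoid.subset_closure ⟨k, rfl⟩, (pow_pos h0 k).ne', ?_⟩
  rintro ⟨y, z, hy, hz, hy0, hz0, hyz⟩
  obtain ⟨p, hp, hpn⟩ := Nat.exists_prime_and_dvd (n := r.num.natAbs) (by omega)
  have := Fact.mk hp
  have hv := padicValRat_pos_of_dvd_num h0.ne' (Int.natCast_dvd.mpr hpn)
  have hyk : y < r ^ k := by linarith [(nonneg_of_mem_S h0.le hz).lt_of_ne' hz0]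
  have hzk : z < r ^ k := by linarith [(nonneg_of_mem_S h0.le hy).lt_of_ne' hy0]
  have hval := (le_min (le_padicValRat_of_mem_S h0 h1 hv.le hy hyk hy0)
    (le_padicValRat_of_mem_S h0 h1 hv.le hz hzk hz0)).trans
    (padicValRat.min_le_padicValRat_add (hyz ▸ (pow_pos h0 k).ne'))
  rw [← hyz, padicValRat.pow] at hval
  linarith

lemma add_mem_atomLengthSet {r x y : ℚ} {a b : ℕ} (ha : a ∈ atomLengthSet r x)
    (hb : b ∈ atomLengthSet r y) : a + b ∈ atomLengthSet r (x + y) := by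
  obtain ⟨f, hf, rfl⟩ := ha
  obtain ⟨g, hg, rfl⟩ := hb
  exact ⟨Fin.append f g, Fin.addCases (by simpa using hf) (by simpa using hg),
    by simp [Fin.sum_univ_add]⟩

lemma mem_atomLengthSet_mul {r a : ℚ} (ha : IsAtomS r a) (c : ℕ) :
    c ∈ atomLengthSet r (c * a) :=
  ⟨fun _ => a, fun _ => ha, by simp⟩

lemma mem_atomLengthSet_natCast_mul_pow {r : ℚ} (hatom : ∀ k, IsAtomS r (r ^ k)) {n d : ℕ}
    (hnd : n ≤ d) (hdr : (d : ℚ) * r = n) (k j : ℕ) :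
    d + k * (d - n) ∈ atomLengthSet r (n * r ^ j) := by
  induction k generalizing j with
  | zero =>
    have h : (n : ℚ) * r ^ j = d * r ^ (j + 1) := by rw [pow_succ, ← hdr]; ring
    simpa [h] using mem_atomLengthSet_mul (hatom (j + 1)) d
  | succ k ih =>
    have h : (n : ℚ) * r ^ j = (d - n : ℕ) * r ^ (j + 1) + n * r ^ (j + 1) := by
      rw [Nat.cast_sub hnd, pow_succ]; linear_combination -r ^ j * hdr
    rw [h, show d + (k + 1) * (d - n) = (d - n) + (d + k * (d - n)) by ring]
    exact add_mem_atomLengthSet (mem_atomLengthSet_mul (hatom (j + 1)) (d - n)) (ih (j + 1))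

lemma atomLengthSet_infinite {r : ℚ} (h0 : 0 < r) (h1 : r < 1) (hn : 1 < r.num) :
    (atomLengthSet r r.num.natAbs).Infinite := by
  have hnd : r.num.natAbs < r.den := by
    have := Rat.num_lt_denom_iff.mpr h1; omega
  have hdr : (r.den : ℚ) * r = r.num.natAbs := by
    rw [Nat.cast_natAbs, abs_of_pos (by exact_mod_cast hn.trans' one_pos), mul_comm]
    exact_mod_cast Rat.mul_den_eq_num r
  refine Set.infinite_of_injective_forall_mem (fun a b hab => ?_) fun k =>
    by simpa using mem_atomLengthSet_natCast_mul_pow (isAtomS_pow h0 h1 hn) hnd.le hdr k 0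
  exact Nat.eq_of_mul_eq_mul_right (Nat.sub_pos_of_lt hnd) (Nat.add_left_cancel hab)

theorem stmt2 (r : ℚ) (h0 : 0 < r) (hat : r = 1 ∨ 1 < r.num) :
    (∀ x ∈ S r, x ≠ 0 → (atomLengthSet r x).Finite) ↔ 1 ≤ r := by
  refine ⟨fun H => ?_, fun hr x _ _ => atomLengthSet_finite hr x⟩
  by_contra! h1
  have hn : 1 < r.num := hat.resolve_left h1.ne
  exact atomLengthSet_infinite h0 h1 hn
    (H _ (natCast_mem_S r _) (Nat.cast_ne_zero.mpr (by omega)))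
end

section
/- Let r ∈ ℚ_{>0} \ ℕ with n(r) > 1 (so d(r) > 1 and S_r is atomic). Then for every nonzero x ∈ S_r admitting more than one factorization, Δ(x) = { |n(r) − d(r)| }, and consequently the delta set of the monoid satisfies Δ(S_r) = { |n(r) − d(r)| }. -/
open Finsupp
open scoped ENNReal

/-- The delta set of `x` in `S_r`. -/
def deltaSet (r x : ℚ) : Set ℕ :=
  {e | 0 < e ∧ ∃ l ∈ lengthSet r x,
    lengthSet r x ∩ Set.Icc l (l + e) = {l, l + e}}


/-! A factorization `α` of `x` is encoded as `P_α = ∑ α_i X^i ∈ ℤ[X]`, so that `P_α(r) = x` and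
`P_α(1) = |α|`. By Gauss's lemma the primitive polynomial `d X - n` divides `P_β - P_α` for any
two factorizations of `x`; evaluating at `1` shows that all lengths of `x` are congruent modulo
`n - d`. Trading `d` copies of `r^(j+1)` for `n` copies of `r^j` changes the length by `n - d`.
A factorization admitting no such trade (all coefficients in positive degree below `d`) is
unique and of extremal length, since then `(P_β - P_α) / (d X - n)` has nonnegative
coefficients. Hence between any two lengths of `x` there are two lengths at distance exactly
`|n - d|`, and no two consecutive lengths are farther apart. -/

open Polynomial

namespace PuiseuxMonoid

variable {r x : ℚ} {α β : ℕ →₀ ℕ} {ℓ₁ ℓ₂ : ℕ}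

noncomputable def factorPoly (α : ℕ →₀ ℕ) : ℤ[X] := α.sum fun i c => monomial i (c : ℤ)

@[simp]
lemma coeff_factorPoly (α : ℕ →₀ ℕ) (i : ℕ) : (factorPoly α).coeff i = α i := by
  simp +contextual [factorPoly, Finsupp.sum, coeff_monomial]

lemma factorPoly_add (α β : ℕ →₀ ℕ) : factorPoly (α + β) = factorPoly α + factorPoly β :=
  Finsupp.sum_add_index' (by simp) (by simp)

@[simp]
lemma factorPoly_single (i c : ℕ) : factorPoly (Finsupp.single i c) = monomial i (c : ℤ) :=
  Finsupp.sum_single_index (by simp)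

lemma eval_one_factorPoly (α : ℕ →₀ ℕ) : (factorPoly α).eval 1 = flen α := by
  simp [factorPoly, flen, Finsupp.sum, eval_finsetSum]

lemma isFactorization_iff : IsFactorization r x α ↔ aeval r (factorPoly α) = x := by
  simp [IsFactorization, factorPoly, Finsupp.sum]

noncomputable def denXSubNum (r : ℚ) : ℤ[X] := C (r.den : ℤ) * X - C r.num

lemma isPrimitive_denXSubNum (r : ℚ) : (denXSubNum r).IsPrimitive := by
  intro k hk
  have h0 : k ∣ r.num := by
    simpa [denXSubNum, -eq_intCast, coeff_C] using (C_dvd_iff_dvd_coeff _ _).1 hk 0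
  have h1 : k ∣ r.den := by
    simpa [denXSubNum, -eq_intCast, coeff_C] using (C_dvd_iff_dvd_coeff _ _).1 hk 1
  exact r.isCoprime_num_den.isUnit_of_dvd' h0 h1

lemma map_denXSubNum (r : ℚ) :
    (denXSubNum r).map (Int.castRingHom ℚ) = C (r.den : ℚ) * (X - C r) := by
  rw [mul_sub, ← C_mul, mul_comm _ r, Rat.mul_den_eq_num]
  simp [denXSubNum]

/-- Gauss's lemma: `d X - n` is primitive and vanishes at `r`. -/
lemma denXSubNum_dvd (hα : IsFactorization r x α) (hβ : IsFactorization r x β) :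
    denXSubNum r ∣ factorPoly β - factorPoly α := by
  rw [IsPrimitive.Int.dvd_iff_map_cast_dvd_map_cast _ _ (isPrimitive_denXSubNum r),
    map_denXSubNum, (isUnit_C.2 (by simp : (r.den : ℚ) ≠ 0).isUnit).mul_left_dvd,
    dvd_iff_isRoot, IsRoot, ← algebraMap_int_eq, eval_map_algebraMap]
  rw [isFactorization_iff] at hα hβ
  simp [hα, hβ]

lemma sub_dvd_flen_sub (hα : IsFactorization r x α) (hβ : IsFactorization r x β) :
    r.num - r.den ∣ (flen β : ℤ) - flen α := by
  have := eval_dvd (x := 1) (denXSubNum_dvd hα hβ)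
  simp only [denXSubNum, eval_sub, eval_mul, eval_C, eval_X, mul_one, eval_one_factorPoly]
    at this
  rwa [← neg_sub, neg_dvd] at this

lemma natAbs_dvd_sub_of_mem_lengthSet (h₁ : ℓ₁ ∈ lengthSet r x) (h₂ : ℓ₂ ∈ lengthSet r x) :
    (r.num - r.den).natAbs ∣ ℓ₂ - ℓ₁ := by
  obtain ⟨α, hα, rfl⟩ := h₁
  obtain ⟨β, hβ, rfl⟩ := h₂
  rcases le_total (flen α) (flen β) with h | h
  · have := Int.natAbs_dvd_natAbs.2 (sub_dvd_flen_sub hα hβ)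
    rwa [show ((flen β : ℤ) - flen α).natAbs = flen β - flen α by omega] at this
  · simp [Nat.sub_eq_zero_of_le h]

/-- The coefficients of `q` are recovered from the top down by `d q_j = p_{j+1} + n q_{j+1}`. -/
lemma coeff_nonneg_of_eq_mul {d n : ℤ} (hd : 0 < d) (hn : 0 ≤ n) {p q : ℤ[X]}
    (h : p = (C d * X - C n) * q) (hp : ∀ i, -d < p.coeff (i + 1)) (i : ℕ) :
    0 ≤ q.coeff i := by
  have hcoeff (j : ℕ) : p.coeff (j + 1) = d * q.coeff j - n * q.coeff (j + 1) := by
    simp [h, sub_mul, mul_assoc, coeff_X_mul]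
  suffices ∀ k j, q.natDegree < j + k → 0 ≤ q.coeff j from this (q.natDegree + 1) i (by omega)
  intro k
  induction k with
  | zero => exact fun j hj => (coeff_eq_zero_of_natDegree_lt hj).symm.le
  | succ k ih =>
    intro j hj
    have := ih (j + 1) (by omega)
    nlinarith [hcoeff j, hp j]

lemma eval_one_nonneg {q : ℤ[X]} (h : ∀ i, 0 ≤ q.coeff i) : 0 ≤ q.eval 1 := by
  rw [eval_eq_sum_range]
  exact Finset.sum_nonneg fun i _ => by simpa using h i

def IsCanonical (r : ℚ) (α : ℕ →₀ ℕ) : Prop := ∀ i, α (i + 1) < r.den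

lemma exists_nonneg_quotient (hr : 0 ≤ r.num) (hα : IsFactorization r x α)
    (hc : IsCanonical r α) (hβ : IsFactorization r x β) :
    ∃ q : ℤ[X], factorPoly β - factorPoly α = denXSubNum r * q ∧ ∀ i, 0 ≤ q.coeff i := by
  obtain ⟨q, hq⟩ := denXSubNum_dvd hα hβ
  refine ⟨q, hq, coeff_nonneg_of_eq_mul (by exact_mod_cast r.den_pos) hr hq fun i => ?_⟩
  have := hc i
  rw [coeff_sub, coeff_factorPoly, coeff_factorPoly]
  omega

lemma IsCanonical.eq (hr : 0 ≤ r.num) (hα : IsFactorization r x α) (hβ : IsFactorization r x β)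
    (hcα : IsCanonical r α) (hcβ : IsCanonical r β) : α = β := by
  obtain ⟨q, hq, hq₀⟩ := exists_nonneg_quotient hr hα hcα hβ
  obtain ⟨q', hq', hq'₀⟩ := exists_nonneg_quotient hr hβ hcβ hα
  have hsum : q + q' = 0 := by
    have : denXSubNum r * (q + q') = 0 := by rw [mul_add, ← hq, ← hq']; ring
    exact (mul_eq_zero.1 this).resolve_left (isPrimitive_denXSubNum r).ne_zero
  have hq_zero : q = 0 := by
    ext i
    have := congrArg (coeff · i) hsum
    simp only [coeff_add, coeff_zero] at this ⊢
    linarith [hq₀ i, hq'₀ i]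
  ext i
  have := congrArg (coeff · i) hq
  simp only [coeff_sub, coeff_factorPoly, hq_zero, mul_zero, coeff_zero] at this
  omega

lemma exists_flen_eq_of_isCanonical (hr : 0 ≤ r.num) (hα : IsFactorization r x α)
    (hc : IsCanonical r α) (hβ : IsFactorization r x β) :
    ∃ k : ℤ, 0 ≤ k ∧ (flen α : ℤ) = flen β + (r.num - r.den) * k := by
  obtain ⟨q, hq, hq₀⟩ := exists_nonneg_quotient hr hα hc hβ
  refine ⟨q.eval 1, eval_one_nonneg hq₀, ?_⟩
  have := congrArg (eval 1) hq
  simp only [eval_sub, eval_one_factorPoly, denXSubNum, eval_mul, eval_C, eval_X] at this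
  linarith

lemma exists_exchange_of_not_isCanonical (hr : 0 ≤ r.num) (hβ : IsFactorization r x β)
    (hc : ¬ IsCanonical r β) :
    ∃ γ, IsFactorization r x γ ∧ (flen γ : ℤ) = flen β + (r.num - r.den) := by
  obtain ⟨j, hj⟩ : ∃ j, r.den ≤ β (j + 1) := by simpa [IsCanonical] using hc
  obtain ⟨β', rfl⟩ : ∃ β', β = β' + Finsupp.single (j + 1) r.den :=
    ⟨β - Finsupp.single (j + 1) r.den,
      (tsub_add_cancel_of_le (Finsupp.single_le_iff.2 hj)).symm⟩
  have hnum : ((r.num.toNat : ℤ)) = r.num := Int.toNat_of_nonneg hr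
  refine ⟨β' + Finsupp.single j r.num.toNat, ?_, ?_⟩
  · rw [isFactorization_iff, factorPoly_add] at hβ ⊢
    rw [← hβ]
    simp only [factorPoly_single, map_add, aeval_monomial, map_natCast, hnum]
    rw [algebraMap_int_eq, eq_intCast, ← Rat.mul_den_eq_num]
    ring
  · simp only [← eval_one_factorPoly, factorPoly_add, factorPoly_single, eval_add, eval_monomial]
    simp [hnum]

lemma num_ne_den (hn : 1 < r.num) : r.num ≠ r.den := by
  intro h
  have := r.reduced
  rw [show r.num.natAbs = r.den by omega, Nat.coprime_self] at this
  omega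

lemma exists_adjacent_lengths (hn : 1 < r.num) (h₁ : ℓ₁ ∈ lengthSet r x)
    (h₂ : ℓ₂ ∈ lengthSet r x) (hlt : ℓ₁ < ℓ₂) :
    ∃ a ∈ lengthSet r x, a + (r.num - r.den).natAbs ∈ lengthSet r x ∧
      ℓ₁ ≤ a ∧ a + (r.num - r.den).natAbs ≤ ℓ₂ := by
  have hr : 0 ≤ r.num := by omega
  have hgap := Nat.le_of_dvd (by omega) (natAbs_dvd_sub_of_mem_lengthSet h₁ h₂)
  obtain ⟨α, hα, rfl⟩ := h₁
  obtain ⟨β, hβ, rfl⟩ := h₂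
  rcases (num_ne_den hn).lt_or_gt with hnd | hdn
  · have hβc : ¬ IsCanonical r β := fun hc => by
      obtain ⟨k, hk, h⟩ := exists_flen_eq_of_isCanonical hr hβ hc hα
      nlinarith
    obtain ⟨γ, hγ, hlen⟩ := exists_exchange_of_not_isCanonical hr hβ hβc
    refine ⟨flen γ, ⟨γ, hγ, rfl⟩, ?_, by omega, by omega⟩
    rw [show flen γ + (r.num - r.den).natAbs = flen β by omega]
    exact ⟨β, hβ, rfl⟩
  · have hαc : ¬ IsCanonical r α := fun hc => by
      obtain ⟨k, hk, h⟩ := exists_flen_eq_of_isCanonical hr hα hc hβ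
      nlinarith
    obtain ⟨γ, hγ, hlen⟩ := exists_exchange_of_not_isCanonical hr hα hαc
    refine ⟨flen α, ⟨α, hα, rfl⟩, ?_, le_rfl, by omega⟩
    rw [show flen α + (r.num - r.den).natAbs = flen γ by omega]
    exact ⟨γ, hγ, rfl⟩

lemma natAbs_mem_deltaSet (hn : 1 < r.num) (h₁ : ℓ₁ ∈ lengthSet r x)
    (h₂ : ℓ₂ ∈ lengthSet r x) (hlt : ℓ₁ < ℓ₂) :
    (r.num - r.den).natAbs ∈ deltaSet r x := by
  obtain ⟨a, ha, ha', -, -⟩ := exists_adjacent_lengths hn h₁ h₂ hlt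
  refine ⟨by have := num_ne_den hn; omega, a, ha, Set.ext fun m => ⟨?_, ?_⟩⟩
  · rintro ⟨hm, ham, hma⟩
    simp only [Set.mem_insert_iff, Set.mem_singleton_iff]
    rcases Nat.eq_zero_or_pos (m - a) with h | h
    · exact Or.inl (by omega)
    · have := Nat.le_of_dvd h (natAbs_dvd_sub_of_mem_lengthSet ha hm)
      exact Or.inr (by omega)
  · rintro (rfl | rfl)
    · exact ⟨ha, le_rfl, by omega⟩
    · exact ⟨ha', by omega, le_rfl⟩

lemma deltaSet_subset (hn : 1 < r.num) : deltaSet r x ⊆ {(r.num - r.den).natAbs} := by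
  rintro e ⟨he, l, hl, hset⟩
  have hmem : ∀ m, m ∈ lengthSet r x → l ≤ m → m ≤ l + e → m = l ∨ m = l + e := fun m h₁ h₂ h₃ =>
    (hset.subset ⟨h₁, h₂, h₃⟩ : m ∈ ({l, l + e} : Set ℕ))
  have hle : l + e ∈ lengthSet r x := (hset.symm.subset (Or.inr rfl) : _ ∈ _ ∩ _).1
  obtain ⟨a, ha, ha', hla, hae⟩ := exists_adjacent_lengths hn hl hle (by omega)
  have := num_ne_den hn
  have := hmem a ha hla (by omega)
  have := hmem _ ha' (by omega) hae
  simp only [Set.mem_singleton_iff]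
  omega

lemma deltaSet_eq_singleton (hn : 1 < r.num)
    (hx : ∃ α β : ℕ →₀ ℕ, IsFactorization r x α ∧ IsFactorization r x β ∧ α ≠ β) :
    deltaSet r x = {(r.num - (r.den : ℤ)).natAbs} := by
  have hr : 0 ≤ r.num := by omega
  refine (deltaSet_subset hn).antisymm (Set.singleton_subset_iff.2 ?_)
  obtain ⟨α, β, hα, hβ, hne⟩ := hx
  obtain ⟨γ, hγ, hγc⟩ : ∃ γ, IsFactorization r x γ ∧ ¬ IsCanonical r γ := by
    by_contra! h
    exact hne ((h α hα).eq hr hα hβ (h β hβ))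
  obtain ⟨γ', hγ', hlen⟩ := exists_exchange_of_not_isCanonical hr hγ hγc
  rcases (num_ne_den hn).lt_or_gt with h | h
  · exact natAbs_mem_deltaSet hn ⟨γ', hγ', rfl⟩ ⟨γ, hγ, rfl⟩ (by omega)
  · exact natAbs_mem_deltaSet hn ⟨γ, hγ, rfl⟩ ⟨γ', hγ', rfl⟩ (by omega)

lemma pow_mem_S (r : ℚ) (n : ℕ) : r ^ n ∈ S r :=
  AddSubmonoid.subset_closure ⟨n, rfl⟩

lemma num_mem_S (r : ℚ) : (r.num : ℚ) ∈ S r := by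
  rw [← Rat.mul_den_eq_num, mul_comm, ← nsmul_eq_mul]
  simpa using AddSubmonoid.nsmul_mem _ (pow_mem_S r 1) r.den

lemma exists_ne_factorizations_num (hn : 1 < r.num) :
    ∃ α β : ℕ →₀ ℕ, IsFactorization r r.num α ∧ IsFactorization r r.num β ∧ α ≠ β := by
  refine ⟨Finsupp.single 0 r.num.toNat, Finsupp.single 1 r.den, ?_, ?_, fun h => ?_⟩
  · simp [isFactorization_iff, Int.toNat_of_nonneg (by omega : 0 ≤ r.num)]
  · simp [isFactorization_iff, ← Rat.mul_den_eq_num, mul_comm]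
  · exact r.den_ne_zero (by simpa using (congrArg (· 1) h).symm)

end PuiseuxMonoid

open PuiseuxMonoid in
theorem stmt3_general (r : ℚ) (hn : 1 < r.num) :
    (∀ x ∈ S r, x ≠ 0 →
      (∃ α β : ℕ →₀ ℕ, IsFactorization r x α ∧ IsFactorization r x β ∧ α ≠ β) →
      deltaSet r x = {(r.num - (r.den : ℤ)).natAbs}) ∧
    (⋃ x ∈ {x : ℚ | x ∈ S r ∧ x ≠ 0}, deltaSet r x) = {(r.num - (r.den : ℤ)).natAbs} := by
  refine ⟨fun x _ _ hx => deltaSet_eq_singleton hn hx, ?_⟩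
  refine (Set.iUnion₂_subset fun x _ => deltaSet_subset hn).antisymm ?_
  have hnum : (r.num : ℚ) ≠ 0 := by exact_mod_cast (by omega : r.num ≠ 0)
  rw [Set.singleton_subset_iff]
  have hmem : (r.num : ℚ) ∈ {x : ℚ | x ∈ S r ∧ x ≠ 0} := ⟨num_mem_S r, hnum⟩
  refine Set.mem_biUnion hmem ?_
  rw [deltaSet_eq_singleton hn (exists_ne_factorizations_num hn)]
  exact Set.mem_singleton _

theorem stmt3 (r : ℚ) (h0 : 0 < r) (hd : r.den ≠ 1) (hn : 1 < r.num) :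
    (∀ x ∈ S r, x ≠ 0 →
      (∃ α β : ℕ →₀ ℕ, IsFactorization r x α ∧ IsFactorization r x β ∧ α ≠ β) →
      deltaSet r x = {(r.num - (r.den : ℤ)).natAbs}) ∧
    (⋃ x ∈ {x : ℚ | x ∈ S r ∧ x ≠ 0}, deltaSet r x) = {(r.num - (r.den : ℤ)).natAbs} :=
  stmt3_general r hn
end

section
/- Let r ∈ ℚ with 0 < r < 1 and n(r) > 1 (so S_r is atomic). Then the set of elasticities R(S_r) = { ρ(x) : x ∈ S_r } equals {1, ∞}; that is, every nonzero x ∈ S_r either has a unique length (ρ(x) = 1) or an unbounded set of lengths (ρ(x) = ∞). -/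
open Finsupp
open scoped ENNReal

open Classical in
/-- The elasticity of `x` in `S_r` (as an extended nonnegative real). -/
noncomputable def elast (r x : ℚ) : ℝ≥0∞ :=
  if x = 0 then 1
  else if BddAbove (atomLengthSet r x) then
    (↑(sSup (atomLengthSet r x)) : ℝ≥0∞) / (↑(sInf (atomLengthSet r x)) : ℝ≥0∞)
  else ⊤

/-- The elasticity of the monoid `S_r`. -/
noncomputable def elastM (r : ℚ) : ℝ≥0∞ := ⨆ x ∈ S r, elast r x

/-!
The atoms of `S_r` are exactly the powers `r ^ i`, so the lengths of `x` are the lengths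
`∑ α i` of representations `x = ∑ α i * r ^ i`. If `x` has two representations `α ≠ β`,
let `i` be the first index where they differ: the polynomial `∑ (α j - β j) X ^ j` vanishes
at `r` and is divisible by `X ^ i`, so the rational root theorem gives `n(r) ∣ α i - β i`,
and one of the two representations uses `r ^ i` at least `n(r)` times. Trading `n(r)` copies
of `r ^ i` for `d(r)` copies of `r ^ (i + 1)` gives a strictly longer representation
(`d(r) > n(r)` as `r < 1`) that again has a coefficient `≥ n(r)`, so the lengths of `x` are
unbounded. Hence `ρ(x) ∈ {1, ∞}`, and `x = n(r) = n(r) * r ^ 0` has `ρ(x) = ∞`.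
-/

variable {r x : ℚ} {α β : ℕ →₀ ℕ}

lemma isFactorization_iff_weight : IsFactorization r x α ↔ weight (r ^ ·) α = x := by
  simp [IsFactorization, weight_apply, nsmul_eq_mul]

lemma flen_eq_degree : flen α = degree α := rfl

lemma mem_S_iff_exists_isFactorization : x ∈ S r ↔ ∃ α, IsFactorization r x α := by
  have hgen : {x : ℚ | ∃ n : ℕ, x = r ^ n} = Set.range (r ^ ·) := by
    ext; simp [eq_comm]
  simp only [S, hgen, AddSubmonoid.mem_closure_range_iff, isFactorization_iff_weight,
    weight_apply, eq_comm]

lemma pow_mem_S (r : ℚ) (i : ℕ) : r ^ i ∈ S r := AddSubmonoid.subset_closure ⟨i, rfl⟩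

lemma Finsupp.weight_eq_smul_add_erase {σ R M : Type*} [Semiring R] [AddCommMonoid M]
    [Module R M] (w : σ → M) (f : σ →₀ R) (j : σ) :
    weight w f = f j • w j + weight w (f.erase j) := by
  conv_lhs => rw [← single_add_erase j f]
  rw [map_add, weight_single]

lemma weight_pow_nonneg (hr : 0 ≤ r) (α : ℕ →₀ ℕ) : 0 ≤ weight (r ^ ·) α := by
  rw [weight_apply]
  exact Finset.sum_nonneg fun i _ => by positivity

lemma weight_pow_pos (hr : 0 < r) (hα : α ≠ 0) : 0 < weight (r ^ ·) α := by
  obtain ⟨j, hj⟩ := support_nonempty_iff.mpr hα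
  have hj : 0 < α j := Nat.pos_of_ne_zero (mem_support_iff.mp hj)
  rw [weight_eq_smul_add_erase _ α j, nsmul_eq_mul]
  have := weight_pow_nonneg hr.le (α.erase j)
  positivity

section Polynomial

open Polynomial

noncomputable def intPoly (α : ℕ →₀ ℕ) : ℤ[X] := α.sum fun i c => monomial i (c : ℤ)

lemma coeff_intPoly (α : ℕ →₀ ℕ) (j : ℕ) : (intPoly α).coeff j = α j := by
  classical
  simp +contextual [intPoly, Finsupp.sum, coeff_monomial]

lemma aeval_intPoly (r : ℚ) (α : ℕ →₀ ℕ) :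
    aeval r (intPoly α) = weight (r ^ ·) α := by
  simp [intPoly, weight_apply, map_finsuppSum, aeval_monomial, nsmul_eq_mul]

lemma num_dvd_coeff_zero_of_aeval_eq_zero {p : ℤ[X]} (hp : aeval r p = 0) :
    r.num ∣ p.coeff 0 :=
  (Rat.isFractionRingNum r).dvd_iff_dvd_left.mp (num_dvd_of_is_root hp)

lemma num_dvd_sub_of_forall_lt_eq (hr : r ≠ 0) (hα : IsFactorization r x α)
    (hβ : IsFactorization r x β) {i : ℕ} (hlt : ∀ j < i, α j = β j) :
    r.num ∣ (α i - β i : ℤ) := by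
  set p := intPoly α - intPoly β
  have hcoeff (j : ℕ) : p.coeff j = α j - β j := by simp [p, coeff_intPoly]
  obtain ⟨q, hq⟩ : X ^ i ∣ p := X_pow_dvd_iff.mpr fun j hj => by simp [hcoeff, hlt j hj]
  have hp : aeval r p = 0 := by
    rw [isFactorization_iff_weight] at hα hβ
    simp [p, aeval_intPoly, hα, hβ]
  rw [hq, map_mul, map_pow, aeval_X] at hp
  have hq0 := num_dvd_coeff_zero_of_aeval_eq_zero
    ((mul_eq_zero.mp hp).resolve_left (pow_ne_zero _ hr))
  rwa [← coeff_X_pow_mul q i 0, zero_add, ← hq, hcoeff] at hq0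

end Polynomial

lemma exists_num_le_of_ne (hr : r ≠ 0) (hα : IsFactorization r x α)
    (hβ : IsFactorization r x β) (hne : α ≠ β) :
    ∃ i, r.num ≤ α i ∨ r.num ≤ β i := by
  classical
  have hex : ∃ j, α j ≠ β j := by simpa [Finsupp.ext_iff] using hne
  set i := Nat.find hex
  refine ⟨i, ?_⟩
  have hdvd := num_dvd_sub_of_forall_lt_eq hr hα hβ fun j hj => not_not.mp (Nat.find_min hex hj)
  have hdiff : (α i : ℤ) - β i ≠ 0 :=
    sub_ne_zero.mpr (by exact_mod_cast Nat.find_spec hex)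
  have := Int.le_of_dvd (abs_pos.mpr hdiff) ((dvd_abs _ _).mpr hdvd)
  rcases abs_cases ((α i : ℤ) - β i) with ⟨h, -⟩ | ⟨h, -⟩ <;> omega

lemma eq_single_of_isFactorization_pow (h1 : r < 1) (hn : 1 < r.num) {k : ℕ}
    (hα : IsFactorization r (r ^ k) α) : α = single k 1 := by
  have hr : 0 < r := Rat.num_pos.mp (by omega)
  rw [isFactorization_iff_weight] at hα
  have hsplit (j : ℕ) : α j * r ^ j + weight (r ^ ·) (α.erase j) = r ^ k := by
    simpa only [nsmul_eq_mul] using (weight_eq_smul_add_erase _ α j).symm.trans hα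
  have hbelow (j : ℕ) (hj : j < k) : α j = 0 := by
    by_contra h
    have : r ^ k < r ^ j := pow_lt_pow_right_of_lt_one₀ hr h1 hj
    have : (1 : ℚ) ≤ α j := by exact_mod_cast Nat.one_le_iff_ne_zero.mpr h
    nlinarith [hsplit j, weight_pow_nonneg hr.le (α.erase j), pow_pos hr j]
  have hk : α k ≠ 0 := by
    intro hk
    have hpow : IsFactorization r (r ^ k) (single k 1) := by simp [IsFactorization]
    have := num_dvd_sub_of_forall_lt_eq hr.ne' (isFactorization_iff_weight.mpr hα) hpow
      (i := k) fun j hj => by simp [hbelow j hj, single_eq_of_ne hj.ne]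
    simp only [hk, single_eq_same, Nat.cast_zero, Nat.cast_one, zero_sub, dvd_neg] at this
    have := Int.le_of_dvd one_pos this
    omega
  have hk1 : (1 : ℚ) ≤ α k := by exact_mod_cast Nat.one_le_iff_ne_zero.mpr hk
  have hrest := weight_pow_nonneg hr.le (α.erase k)
  have hrk := pow_pos hr k
  have hαk : α k = 1 := by exact_mod_cast (by nlinarith [hsplit k] : (α k : ℚ) = 1)
  have herase : α.erase k = 0 := by
    by_contra h
    nlinarith [hsplit k, weight_pow_pos hr h]
  rw [← single_add_erase k α, hαk, herase, add_zero]

lemma isAtomS_iff (h1 : r < 1) (hn : 1 < r.num) {a : ℚ} : IsAtomS r a ↔ ∃ i, a = r ^ i := by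
  have hr : 0 < r := Rat.num_pos.mp (by omega)
  constructor
  · rintro ⟨ha, ha0, hirred⟩
    obtain ⟨α, hα⟩ := mem_S_iff_exists_isFactorization.mp ha
    rw [isFactorization_iff_weight] at hα
    have hα0 : α ≠ 0 := fun h => ha0 (by rw [← hα, h, map_zero])
    obtain ⟨j, hj⟩ := support_nonempty_iff.mpr hα0
    have hle : single j 1 ≤ α :=
      single_le_iff.mpr (Nat.one_le_iff_ne_zero.mpr (mem_support_iff.mp hj))
    refine ⟨j, ?_⟩
    by_contra hne
    refine hirred ⟨weight (r ^ ·) (α - single j 1), r ^ j,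
      mem_S_iff_exists_isFactorization.mpr ⟨_, isFactorization_iff_weight.mpr rfl⟩,
      pow_mem_S r j,
      fun h => hne ?_, (pow_pos hr j).ne', ?_⟩
    · rw [← hα, ← tsub_add_cancel_of_le hle, map_add, h, weight_single]; simp
    · conv_lhs => rw [← hα, ← tsub_add_cancel_of_le hle]
      rw [map_add, weight_single, one_smul]
  · rintro ⟨i, rfl⟩
    refine ⟨pow_mem_S r i, (pow_pos hr i).ne', ?_⟩
    rintro ⟨y, z, hy, hz, hy0, hz0, hyz⟩
    obtain ⟨β, hβ⟩ := mem_S_iff_exists_isFactorization.mp hy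
    obtain ⟨γ, hγ⟩ := mem_S_iff_exists_isFactorization.mp hz
    rw [isFactorization_iff_weight] at hβ hγ
    have hsum := eq_single_of_isFactorization_pow h1 hn (α := β + γ)
      (by rw [isFactorization_iff_weight, map_add, hβ, hγ, hyz])
    have hdeg := congrArg degree hsum
    rw [map_add, degree_single] at hdeg
    have hβ0 : degree β ≠ 0 := fun h => hy0 (by simp [← hβ, (degree_eq_zero_iff β).mp h])
    have hγ0 : degree γ ≠ 0 := fun h => hz0 (by simp [← hγ, (degree_eq_zero_iff γ).mp h])
    omega

lemma add_mem_atomLengthSet_s7 {s t : ℕ} {y : ℚ} (hs : s ∈ atomLengthSet r x)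
    (ht : t ∈ atomLengthSet r y) : s + t ∈ atomLengthSet r (x + y) := by
  obtain ⟨f, hf, rfl⟩ := hs
  obtain ⟨g, hg, rfl⟩ := ht
  refine ⟨Fin.append f g, Fin.addCases (by simpa using hf) (by simpa using hg), ?_⟩
  simp [Fin.sum_univ_add]

lemma atomLengthSet_eq_lengthSet (h1 : r < 1) (hn : 1 < r.num) (x : ℚ) :
    atomLengthSet r x = lengthSet r x := by
  ext t
  constructor
  · rintro ⟨f, hf, rfl⟩
    choose g hg using fun i => (isAtomS_iff h1 hn).mp (hf i)
    refine ⟨∑ i, single (g i) 1, ?_, ?_⟩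
    · simp [isFactorization_iff_weight, map_sum, weight_single, hg]
    · simp [flen_eq_degree, map_sum]
  · rintro ⟨α, hα, rfl⟩
    rw [isFactorization_iff_weight] at hα
    subst hα
    rw [flen_eq_degree]
    induction α using Finsupp.induction_linear with
    | zero =>
      rw [map_zero, map_zero]
      exact ⟨Fin.elim0, fun i => i.elim0, by simp⟩
    | add β γ hβ hγ => simpa only [map_add] using add_mem_atomLengthSet_s7 hβ hγ
    | single i c =>
      refine ⟨fun _ => r ^ i, fun _ => (isAtomS_iff h1 hn).mpr ⟨i, rfl⟩, ?_⟩
      simp [weight_single]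

lemma exists_isFactorization_degree_lt (hr : 0 < r) (h1 : r < 1) (hα : IsFactorization r x α)
    {i : ℕ} (hi : r.num ≤ α i) :
    ∃ β, IsFactorization r x β ∧ degree α < degree β ∧ r.num ≤ β (i + 1) := by
  obtain ⟨n, hnum⟩ := Int.eq_ofNat_of_zero_le (Rat.num_pos.mpr hr).le
  have hnd : n < r.den := by exact_mod_cast hnum ▸ Rat.num_lt_denom_iff.mpr h1
  have hle : single i n ≤ α := single_le_iff.mpr (by omega)
  refine ⟨α - single i n + single (i + 1) r.den, ?_, ?_, ?_⟩
  · rw [isFactorization_iff_weight] at hα ⊢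
    conv_rhs => rw [← hα, ← tsub_add_cancel_of_le hle]
    simp only [map_add, weight_single, nsmul_eq_mul, pow_succ]
    rw [← mul_assoc, mul_comm _ r, ← mul_assoc, Rat.mul_den_eq_num, hnum, Int.cast_natCast]
  · conv_lhs => rw [← tsub_add_cancel_of_le hle]
    simp only [map_add, degree_single]
    omega
  · rw [Finsupp.add_apply, single_eq_same]
    push_cast
    omega

lemma not_bddAbove_lengthSet (hr : 0 < r) (h1 : r < 1) (hα : IsFactorization r x α)
    {i : ℕ} (hi : r.num ≤ α i) : ¬ BddAbove (lengthSet r x) := by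
  have hlong (k : ℕ) :
      ∃ β j, IsFactorization r x β ∧ r.num ≤ β j ∧ k ≤ degree β := by
    induction k with
    | zero => exact ⟨α, i, hα, hi, Nat.zero_le _⟩
    | succ k ih =>
      obtain ⟨β, j, hβ, hj, hk⟩ := ih
      obtain ⟨γ, hγ, hlt, hj'⟩ := exists_isFactorization_degree_lt hr h1 hβ hj
      exact ⟨γ, j + 1, hγ, hj', by omega⟩
  rintro ⟨b, hb⟩
  obtain ⟨β, -, hβ, -, hk⟩ := hlong (b + 1)
  have := hb ⟨β, hβ, flen_eq_degree⟩
  omega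

lemma elast_eq_one_or_top (h1 : r < 1) (hn : 1 < r.num) (hx : x ∈ S r) :
    elast r x = 1 ∨ elast r x = ⊤ := by
  have hr : 0 < r := Rat.num_pos.mp (by omega)
  rw [elast, atomLengthSet_eq_lengthSet h1 hn]
  split_ifs with hx0 hbdd
  · exact Or.inl rfl
  · obtain ⟨α, hα⟩ := mem_S_iff_exists_isFactorization.mp hx
    have hunique : lengthSet r x = {degree α} := by
      refine Set.eq_singleton_iff_unique_mem.mpr ⟨⟨α, hα, flen_eq_degree⟩, ?_⟩
      rintro _ ⟨β, hβ, rfl⟩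
      by_contra hne
      have hβα : β ≠ α := fun h => hne (h ▸ flen_eq_degree)
      obtain ⟨i, hi | hi⟩ := exists_num_le_of_ne hr.ne' hβ hα hβα
      exacts [not_bddAbove_lengthSet hr h1 hβ hi hbdd, not_bddAbove_lengthSet hr h1 hα hi hbdd]
    have hdeg : degree α ≠ 0 := fun h => hx0 <| by
      rw [← hα, (degree_eq_zero_iff α).mp h]; rfl
    left
    rw [hunique, csSup_singleton, csInf_singleton]
    exact ENNReal.div_self (by exact_mod_cast hdeg) ENNReal.coe_ne_top
  · exact Or.inr rfl

lemma elast_natCast_eq_top (h1 : r < 1) (hn : 1 < r.num) {n : ℕ} (hrn : r.num ≤ n) :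
    elast r n = ⊤ := by
  have hr : 0 < r := Rat.num_pos.mp (by omega)
  have hfact : IsFactorization r n (single 0 n) := by simp [IsFactorization]
  have hunbdd := not_bddAbove_lengthSet hr h1 hfact (i := 0) (by simpa using hrn)
  rw [elast, if_neg (by norm_cast; omega), atomLengthSet_eq_lengthSet h1 hn, if_neg hunbdd]

theorem stmt7_general (r : ℚ) (h1 : r < 1) (hn : 1 < r.num) :
    {e : ℝ≥0∞ | ∃ x ∈ S r, elast r x = e} = {1, ⊤} := by
  ext e
  constructor
  · rintro ⟨x, hx, rfl⟩
    exact elast_eq_one_or_top h1 hn hx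
  · rintro (rfl | rfl)
    · exact ⟨0, zero_mem _, if_pos rfl⟩
    · have hnum : (r.num.toNat : ℚ) ∈ S r :=
        mem_S_iff_exists_isFactorization.mpr ⟨single 0 r.num.toNat, by simp [IsFactorization]⟩
      exact ⟨_, hnum, elast_natCast_eq_top h1 hn (Int.self_le_toNat r.num)⟩

theorem stmt7 (r : ℚ) (h0 : 0 < r) (h1 : r < 1) (hn : 1 < r.num) :
    {e : ℝ≥0∞ | ∃ x ∈ S r, elast r x = e} = {1, ⊤} :=
  stmt7_general r h1 hn
end
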